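/- A probability measure μ on F_S (with associated i.i.d. function sequence and coalescence relation ∼) is a block measure if and only if its coalescing classes C = {C_1,…,C_ℓ} are almost surely constant; in that case μ is a C-block measure. -/

import Mathlib

/-!
Under `F 0 = f` two distinct states `i, j` coalesce iff `f i, f j` coalesce for the shifted
sequence `(F (n + 1))`, which is independent of `F 0` and has the same law. Hence, for `f` in the
support of `μ`, `{i ∼ j}` is null iff `{f i ∼ f j}` is null. When the coalescence classes are a.s.
the fibres of a surjection `g`, "`g i = g j`" means "`i ∼ j` with positive probability", so every
such `f` induces an injective, hence bijective, self-map of the blocks.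

Conversely, if `μ` is a `c`-block measure, a.s. every `F t` permutes the `c`-blocks, so coalescing
states share a block; as there are a.s. also exactly `ℓ` coalescence classes, they are the blocks.
-/

open Finset MeasureTheory

/-- `comps f t = f_t ∘ ⋯ ∘ f_1` (indexed from `0`). -/
def comps {S : Type*} (f : ℕ → S → S) : ℕ → S → S
  | 0 => id
  | t + 1 => f t ∘ comps f t

/-- States `i` and `j` coalesce under the sequence of functions `f`. -/
def Coalesces {S : Type*} (f : ℕ → S → S) (i j : S) : Prop :=
  ∃ t : ℕ, comps f t i = comps f t j

/-- `μ` is a block measure with blocks the fibres of the surjection `c : S → Fin ℓ`,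
for the i.i.d. iteration driven by `F` on the probability space `(Ω, Pr)`:
(a) every function in the support of `μ` permutes the blocks, and
(b) the number of coalescence classes is a.s. `ℓ`. -/
def IsBlockMeasure {S : Type*} {Ω : Type*} [MeasurableSpace Ω] (Pr : Measure Ω)
    (F : ℕ → Ω → S → S) (μ : (S → S) → ℝ) {ℓ : ℕ} (c : S → Fin ℓ) : Prop :=
  Function.Surjective c ∧
  (∀ f : S → S, μ f ≠ 0 → ∃ π : Equiv.Perm (Fin ℓ), ∀ i, c (f i) = π (c i)) ∧
  (∀ᵐ ω ∂Pr, ∃ g : S → Fin ℓ, Function.Surjective g ∧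
      ∀ i j, Coalesces (fun n => F n ω) i j ↔ g i = g j)

open scoped ENNReal

section Coalescence

variable {S : Type*}

lemma comps_congr {f f' : ℕ → S → S} {t : ℕ} (h : ∀ s < t, f s = f' s) :
    comps f t = comps f' t := by
  induction t with
  | zero => rfl
  | succ t ih =>
    simp only [comps, h t t.lt_succ_self, ih fun s hs => h s (hs.trans t.lt_succ_self)]

lemma comps_succ' (f : ℕ → S → S) (t : ℕ) (x : S) :
    comps f (t + 1) x = comps (fun n => f (n + 1)) t (f 0 x) := by
  induction t with
  | zero => rfl
  | succ t ih => exact congrArg (f (t + 1)) ih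

lemma coalesces_refl (f : ℕ → S → S) (i : S) : Coalesces f i i := ⟨0, rfl⟩

lemma coalesces_iff_eq_or_coalesces_shift (f : ℕ → S → S) (i j : S) :
    Coalesces f i j ↔ i = j ∨ Coalesces (fun n => f (n + 1)) (f 0 i) (f 0 j) := by
  constructor
  · rintro ⟨_ | t, ht⟩
    · exact Or.inl ht
    · exact Or.inr ⟨t, by rwa [comps_succ', comps_succ'] at ht⟩
  · rintro (rfl | ⟨t, ht⟩)
    · exact coalesces_refl f i
    · exact ⟨t + 1, by rwa [comps_succ', comps_succ']⟩

lemma exists_perm_comps_of_forall_exists_perm {β : Type*} {f : ℕ → S → S} {c : S → β}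
    (hf : ∀ t, ∃ π : Equiv.Perm β, ∀ i, c (f t i) = π (c i)) (t : ℕ) :
    ∃ π : Equiv.Perm β, ∀ i, c (comps f t i) = π (c i) := by
  induction t with
  | zero => exact ⟨Equiv.refl β, fun _ => rfl⟩
  | succ t ih =>
    obtain ⟨σ, hσ⟩ := ih
    obtain ⟨π, hπ⟩ := hf t
    exact ⟨σ.trans π, fun i => (hπ _).trans (congrArg π (hσ i))⟩

lemma Coalesces.eq_of_forall_exists_perm {β : Type*} {f : ℕ → S → S} {c : S → β}
    (hf : ∀ t, ∃ π : Equiv.Perm β, ∀ i, c (f t i) = π (c i)) {i j : S}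
    (hij : Coalesces f i j) : c i = c j := by
  obtain ⟨t, ht⟩ := hij
  obtain ⟨π, hπ⟩ := exists_perm_comps_of_forall_exists_perm hf t
  exact π.injective (by rw [← hπ, ← hπ, ht])

end Coalescence

section Surjections

variable {S β : Type*} [Finite β] {c d : S → β}

lemma eq_iff_eq_of_surjective_of_imp (hc : c.Surjective) (hd : d.Surjective)
    (h : ∀ i j, d i = d j → c i = c j) (i j : S) : c i = c j ↔ d i = d j := by
  set e : β → β := fun b => c (Function.surjInv hd b)
  have hce : ∀ i, c i = e (d i) := fun i => h _ _ (Function.surjInv_eq hd (d i)).symm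
  have he : e.Injective := Finite.injective_iff_surjective.mpr fun b => by
    obtain ⟨i, rfl⟩ := hc b
    exact ⟨d i, (hce i).symm⟩
  rw [hce, hce, he.eq_iff]

lemma exists_perm_apply_eq_of_eq_iff_eq (hc : c.Surjective) {f : S → S}
    (h : ∀ i j, c (f i) = c (f j) ↔ c i = c j) : ∃ π : Equiv.Perm β, ∀ i, c (f i) = π (c i) := by
  set e : β → β := fun b => c (f (Function.surjInv hc b))
  have hce : ∀ i, c (f i) = e (c i) := fun i => (h _ _).mpr (Function.surjInv_eq hc (c i)).symm
  have he : e.Injective := fun a b hab => by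
    simpa only [Function.surjInv_eq] using (h _ _).mp hab
  exact ⟨Equiv.ofBijective e (Finite.injective_iff_bijective.mp he), hce⟩

end Surjections

def HasIIDLaw {α Ω : Type*} [MeasurableSpace Ω] (Pr : Measure Ω) (F : ℕ → Ω → α)
    (μ : α → ℝ) : Prop :=
  ∀ (T : Finset ℕ) (g : ℕ → α),
    Pr {ω | ∀ t ∈ T, F t ω = g t} = ∏ t ∈ T, ENNReal.ofReal (μ (g t))

namespace HasIIDLaw

variable {α Ω : Type*} [MeasurableSpace Ω] {Pr : Measure Ω} {F : ℕ → Ω → α} {μ : α → ℝ}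

lemma measure_eq (h : HasIIDLaw Pr F μ) (t : ℕ) (a : α) :
    Pr {ω | F t ω = a} = ENNReal.ofReal (μ a) := by
  simpa using h {t} fun _ => a

lemma measure_prefix_eq [Nonempty α] (h : HasIIDLaw Pr F μ) {t : ℕ} (p : Fin t → α) :
    Pr {ω | ∀ s : Fin t, F s ω = p s} = ∏ s, ENNReal.ofReal (μ (p s)) := by
  set g : ℕ → α := Function.extend Fin.val p fun _ => Classical.arbitrary α
  have hg : ∀ s : Fin t, g s = p s := Fin.val_injective.extend_apply p _
  convert h (range t) g using 2
  · ext ω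
    simp only [Set.mem_ofPred_eq, mem_range]
    exact ⟨fun hω s hs => (hω ⟨s, hs⟩).trans (hg ⟨s, hs⟩).symm,
      fun hω s => (hω s s.isLt).trans (hg s)⟩
  · rw [← Fin.prod_univ_eq_prod_range]
    simp only [hg]

lemma ae_forall_ne_zero [Countable α] (h : HasIIDLaw Pr F μ) : ∀ᵐ ω ∂Pr, ∀ t, μ (F t ω) ≠ 0 := by
  refine ae_all_iff.mpr fun t => ae_iff.mpr ?_
  simp only [ne_eq, not_not]
  refine (measure_preimage_eq_zero_iff_of_countable (s := {a | μ a = 0}) (Set.to_countable _)).mpr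
    fun a ha => ?_
  exact (h.measure_eq t a).trans (by rw [show μ a = 0 from ha, ENNReal.ofReal_zero])

lemma measure_prefix_mem_le [Nonempty α] (h : HasIIDLaw Pr F μ) {t : ℕ} (P : Finset (Fin t → α)) :
    Pr {ω | (fun s : Fin t => F s ω) ∈ P} ≤ ∑ p ∈ P, ∏ s, ENNReal.ofReal (μ (p s)) :=
  calc Pr {ω | (fun s : Fin t => F s ω) ∈ P}
      ≤ Pr (⋃ p ∈ P, {ω | ∀ s : Fin t, F s ω = p s}) :=
        measure_mono fun _ hω => Set.mem_biUnion hω fun _ => rfl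
    _ ≤ ∑ p ∈ P, Pr {ω | ∀ s : Fin t, F s ω = p s} := measure_biUnion_finset_le _ _
    _ = ∑ p ∈ P, ∏ s, ENNReal.ofReal (μ (p s)) :=
        sum_congr rfl fun p _ => h.measure_prefix_eq p

variable [Fintype α]

-- `F` is not assumed measurable, so the lower bound comes from the upper bound on the
-- complementary event together with total mass one.
lemma measure_prefix_mem [Nonempty α] [IsProbabilityMeasure Pr] (h : HasIIDLaw Pr F μ)
    (hμ : ∑ a, ENNReal.ofReal (μ a) = 1) {t : ℕ} (P : Finset (Fin t → α)) :
    Pr {ω | (fun s : Fin t => F s ω) ∈ P} = ∑ p ∈ P, ∏ s, ENNReal.ofReal (μ (p s)) := by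
  classical
  set A := {ω | (fun s : Fin t => F s ω) ∈ P}
  set w : Finset (Fin t → α) → ℝ≥0∞ := fun Q => ∑ p ∈ Q, ∏ s, ENNReal.ofReal (μ (p s))
  have htotal : w P + w Pᶜ = 1 := by
    simp only [w]
    rw [sum_add_sum_compl, ← Fintype.prod_sum fun (_ : Fin t) a => ENNReal.ofReal (μ a), hμ,
      prod_const_one]
  have hcompl : Pr Aᶜ ≤ w Pᶜ := by
    simpa only [A, Set.compl_ofPred, ← mem_compl] using h.measure_prefix_mem_le Pᶜ
  refine (h.measure_prefix_mem_le P).antisymm (ENNReal.le_of_add_le_add_right (a := w Pᶜ) ?_ ?_)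
  · exact ne_top_of_le_ne_top ENNReal.one_ne_top (htotal ▸ le_add_self)
  · calc w P + w Pᶜ = Pr Set.univ := by rw [htotal, measure_univ]
      _ ≤ Pr A + Pr Aᶜ := measure_univ_le_add_compl A
      _ ≤ Pr A + w Pᶜ := by gcongr

lemma measure_head_eq_and_tail_mem [Nonempty α] [IsProbabilityMeasure Pr] (h : HasIIDLaw Pr F μ)
    (hμ : ∑ a, ENNReal.ofReal (μ a) = 1) (a : α) {t : ℕ} (Q : Finset (Fin t → α)) :
    Pr {ω | F 0 ω = a ∧ (fun s : Fin t => F (s + 1) ω) ∈ Q}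
      = ENNReal.ofReal (μ a) * Pr {ω | (fun s : Fin t => F s ω) ∈ Q} := by
  set cons : (Fin t → α) ↪ (Fin (t + 1) → α) :=
    ⟨fun q => Fin.cons a q, Fin.cons_right_injective (α := fun _ => α) a⟩
  have hset : {ω | F 0 ω = a ∧ (fun s : Fin t => F (s + 1) ω) ∈ Q}
      = {ω | (fun s : Fin (t + 1) => F s ω) ∈ Q.map cons} := by
    ext ω
    have hω : (fun s : Fin (t + 1) => F s ω) = Fin.cons (F 0 ω) fun s : Fin t => F (s + 1) ω :=
      (Fin.cons_self_tail _).symm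
    simp only [Set.mem_ofPred_eq, mem_map, cons, Function.Embedding.coeFn_mk, hω, Fin.cons_inj]
    exact ⟨fun ⟨ha, hQ⟩ => ⟨_, hQ, ha.symm, rfl⟩, fun ⟨q, hq, ha, hqω⟩ => ⟨ha.symm, hqω ▸ hq⟩⟩
  rw [hset, h.measure_prefix_mem hμ, h.measure_prefix_mem hμ, sum_map, mul_sum]
  simp only [cons, Function.Embedding.coeFn_mk, Fin.prod_univ_succ, Fin.cons_zero, Fin.cons_succ]

lemma measure_head_eq_and_shift [Nonempty α] [IsProbabilityMeasure Pr] (h : HasIIDLaw Pr F μ)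
    (hμ : ∑ a, ENNReal.ofReal (μ a) = 1) (a : α) {t : ℕ} {Φ : (ℕ → α) → Prop}
    (hΦ : ∀ u v : ℕ → α, (∀ s < t, u s = v s) → Φ u → Φ v) :
    Pr {ω | F 0 ω = a ∧ Φ fun n => F (n + 1) ω}
      = ENNReal.ofReal (μ a) * Pr {ω | Φ fun n => F n ω} := by
  classical
  set Q := univ.filter fun q : Fin t → α => ∃ u : ℕ → α, (∀ s : Fin t, u s = q s) ∧ Φ u
  have hQ (u : ℕ → α) : Φ u ↔ (fun s : Fin t => u s) ∈ Q := by
    simp only [Q, mem_filter, mem_univ, true_and]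
    exact ⟨fun hu => ⟨u, fun _ => rfl, hu⟩,
      fun ⟨v, hv, hΦv⟩ => hΦ v u (fun s hs => hv ⟨s, hs⟩) hΦv⟩
  simp only [hQ]
  exact h.measure_head_eq_and_tail_mem hμ a Q

end HasIIDLaw

lemma measure_setOf_ne_zero_iff_of_ae_iff {Ω : Type*} [MeasurableSpace Ω] {Pr : Measure Ω}
    [NeZero Pr] {p : Ω → Prop} {q : Prop} (h : ∀ᵐ ω ∂Pr, p ω ↔ q) :
    Pr {ω | p ω} ≠ 0 ↔ q := by
  by_cases hq : q
  · simp only [hq, iff_true] at h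
    refine iff_of_true (fun h0 => ?_) hq
    obtain ⟨ω, hp, hnp⟩ := (h.and (measure_eq_zero_iff_ae_notMem.mp h0)).exists
    exact hnp hp
  · simp only [hq, iff_false] at h
    exact iff_of_false (not_not.mpr (measure_eq_zero_iff_ae_notMem.mpr h)) hq

lemma HasIIDLaw.ae_coalesces_iff_of_isBlockMeasure {S Ω : Type*} [Finite S] [MeasurableSpace Ω]
    {Pr : Measure Ω} {F : ℕ → Ω → S → S} {μ : (S → S) → ℝ} (h : HasIIDLaw Pr F μ) {ℓ : ℕ}
    {c : S → Fin ℓ} (hc : IsBlockMeasure Pr F μ c) :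
    ∀ᵐ ω ∂Pr, ∀ i j, Coalesces (fun n => F n ω) i j ↔ c i = c j := by
  obtain ⟨hcs, hperm, hclasses⟩ := hc
  filter_upwards [h.ae_forall_ne_zero, hclasses] with ω hsupp ⟨d, hds, hd⟩ i j
  have hcd := eq_iff_eq_of_surjective_of_imp hcs hds fun i j hij =>
    ((hd i j).mpr hij).eq_of_forall_exists_perm fun t => hperm _ (hsupp t)
  rw [hd, hcd]

section BlockMeasure

variable {S Ω : Type*} [Fintype S] [DecidableEq S] [MeasurableSpace Ω] {Pr : Measure Ω}
  [IsProbabilityMeasure Pr] {F : ℕ → Ω → S → S} {μ : (S → S) → ℝ}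

lemma HasIIDLaw.measure_head_eq_and_coalesces_eq_zero_iff (h : HasIIDLaw Pr F μ)
    (hμ : ∑ f, ENNReal.ofReal (μ f) = 1) (f : S → S) (x y : S) :
    Pr {ω | F 0 ω = f ∧ Coalesces (fun n => F (n + 1) ω) x y} = 0 ↔
      ENNReal.ofReal (μ f) = 0 ∨ Pr {ω | Coalesces (fun n => F n ω) x y} = 0 := by
  have : Nonempty (S → S) := ⟨id⟩
  have hstep (t : ℕ) := h.measure_head_eq_and_shift hμ f
    (Φ := fun u => comps u t x = comps u t y) fun u v huv hu => by rwa [comps_congr huv] at hu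
  simp only [Coalesces, ← exists_and_left, Set.ofPred_exists, measure_iUnion_null_iff] at hstep ⊢
  simp only [hstep, mul_eq_zero, forall_or_left]

lemma HasIIDLaw.measure_coalesces_apply_eq_zero (h : HasIIDLaw Pr F μ)
    (hμ : ∑ f, ENNReal.ofReal (μ f) = 1) {f : S → S} (hf : ENNReal.ofReal (μ f) ≠ 0) {i j : S}
    (hij : Pr {ω | Coalesces (fun n => F n ω) i j} = 0) :
    Pr {ω | Coalesces (fun n => F n ω) (f i) (f j)} = 0 := by
  have hsub : {ω | F 0 ω = f ∧ Coalesces (fun n => F (n + 1) ω) (f i) (f j)}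
      ⊆ {ω | Coalesces (fun n => F n ω) i j} := by
    rintro ω ⟨rfl, hω⟩
    exact (coalesces_iff_eq_or_coalesces_shift _ i j).mpr (Or.inr hω)
  exact ((h.measure_head_eq_and_coalesces_eq_zero_iff hμ f _ _).mp
    (measure_mono_null hsub hij)).resolve_left hf

lemma HasIIDLaw.measure_coalesces_apply_ne_zero (h : HasIIDLaw Pr F μ)
    (hμ : ∑ f, ENNReal.ofReal (μ f) = 1) {f : S → S} (hf : ENNReal.ofReal (μ f) ≠ 0) {i j : S}
    (hij : ∀ᵐ ω ∂Pr, Coalesces (fun n => F n ω) i j) :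
    Pr {ω | Coalesces (fun n => F n ω) (f i) (f j)} ≠ 0 := by
  rcases eq_or_ne i j with rfl | hne
  · simp [coalesces_refl]
  intro h0
  have hnull := measure_eq_zero_iff_ae_notMem.mp
    ((h.measure_head_eq_and_coalesces_eq_zero_iff hμ f _ _).mpr (Or.inr h0))
  have hf0 : ∀ᵐ ω ∂Pr, F 0 ω ≠ f := by
    filter_upwards [hij, hnull] with ω hc hn hω
    have hshift := ((coalesces_iff_eq_or_coalesces_shift _ i j).mp hc).resolve_left hne
    rw [hω] at hshift
    exact hn ⟨hω, hshift⟩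
  rw [← h.measure_eq 0 f] at hf
  exact hf (measure_eq_zero_iff_ae_notMem.mpr hf0)

lemma HasIIDLaw.isBlockMeasure_of_ae_coalesces_iff (h : HasIIDLaw Pr F μ)
    (hμ : ∑ f, ENNReal.ofReal (μ f) = 1) (hμnn : ∀ f, 0 ≤ μ f) {k : ℕ} {g : S → Fin k}
    (hg : g.Surjective) (hae : ∀ᵐ ω ∂Pr, ∀ i j, Coalesces (fun n => F n ω) i j ↔ g i = g j) :
    IsBlockMeasure Pr F μ g := by
  have hcoal (i j : S) : Pr {ω | Coalesces (fun n => F n ω) i j} ≠ 0 ↔ g i = g j :=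
    measure_setOf_ne_zero_iff_of_ae_iff (hae.mono fun ω hω => hω i j)
  refine ⟨hg, fun f hf => exists_perm_apply_eq_of_eq_iff_eq hg fun i j => ?_,
    hae.mono fun ω hω => ⟨g, hg, hω⟩⟩
  have hf' : ENNReal.ofReal (μ f) ≠ 0 :=
    (ENNReal.ofReal_pos.mpr ((hμnn f).lt_of_ne' hf)).ne'
  rw [← hcoal, ← hcoal]
  exact ⟨fun hfij hij => hfij (h.measure_coalesces_apply_eq_zero hμ hf' hij),
    fun hij => h.measure_coalesces_apply_ne_zero hμ hf'
      (hae.mono fun ω hω => (hω i j).mpr ((hcoal i j).mp hij))⟩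

end BlockMeasure

theorem blockMeasure_iff_classes_constant_general {S : Type*} [Fintype S] [DecidableEq S]
    {Ω : Type*} [MeasurableSpace Ω] (Pr : Measure Ω) [IsProbabilityMeasure Pr]
    (μ : (S → S) → ℝ) (hμnn : ∀ g, 0 ≤ μ g) (hμsum : ∑ g, μ g = 1)
    (F : ℕ → Ω → S → S)
    (hiid : ∀ (T : Finset ℕ) (g : ℕ → S → S),
      Pr {ω | ∀ t ∈ T, F t ω = g t} = ∏ t ∈ T, ENNReal.ofReal (μ (g t))) :
    ((∃ (ℓ : ℕ) (c : S → Fin ℓ), IsBlockMeasure Pr F μ c) ↔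
      (∃ (k : ℕ) (g : S → Fin k), Function.Surjective g ∧
        ∀ᵐ ω ∂Pr, ∀ i j, Coalesces (fun n => F n ω) i j ↔ g i = g j)) ∧
    ∀ (k : ℕ) (g : S → Fin k), Function.Surjective g →
      (∀ᵐ ω ∂Pr, ∀ i j, Coalesces (fun n => F n ω) i j ↔ g i = g j) →
      IsBlockMeasure Pr F μ g := by
  have hlaw : HasIIDLaw Pr F μ := hiid
  have hμ : ∑ f, ENNReal.ofReal (μ f) = 1 := by
    rw [← ENNReal.ofReal_sum_of_nonneg fun f _ => hμnn f, hμsum, ENNReal.ofReal_one]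
  have hblock (k : ℕ) (g : S → Fin k) (hg : g.Surjective)
      (hae : ∀ᵐ ω ∂Pr, ∀ i j, Coalesces (fun n => F n ω) i j ↔ g i = g j) :
      IsBlockMeasure Pr F μ g :=
    hlaw.isBlockMeasure_of_ae_coalesces_iff hμ hμnn hg hae
  exact ⟨⟨fun ⟨ℓ, c, hc⟩ => ⟨ℓ, c, hc.1, hlaw.ae_coalesces_iff_of_isBlockMeasure hc⟩,
    fun ⟨k, g, hg, hae⟩ => ⟨k, g, hblock k g hg hae⟩⟩, hblock⟩

/-- a probability measure `μ` on `F_S` is a block measure if and only if its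
coalescing classes are almost surely constant; and if the coalescing classes are a.s. the
fibres of a surjection `g`, then `μ` is a `g`-block measure. -/
theorem blockMeasure_iff_classes_constant {S : Type*} [Fintype S] [DecidableEq S] [Nonempty S]
    {Ω : Type*} [MeasurableSpace Ω] (Pr : Measure Ω) [IsProbabilityMeasure Pr]
    (μ : (S → S) → ℝ) (hμnn : ∀ g, 0 ≤ μ g) (hμsum : ∑ g, μ g = 1)
    (F : ℕ → Ω → S → S)
    (hiid : ∀ (T : Finset ℕ) (g : ℕ → S → S),
      Pr {ω | ∀ t ∈ T, F t ω = g t} = ∏ t ∈ T, ENNReal.ofReal (μ (g t))) :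
    ((∃ (ℓ : ℕ) (c : S → Fin ℓ), IsBlockMeasure Pr F μ c) ↔
      (∃ (k : ℕ) (g : S → Fin k), Function.Surjective g ∧
        ∀ᵐ ω ∂Pr, ∀ i j, Coalesces (fun n => F n ω) i j ↔ g i = g j)) ∧
    ∀ (k : ℕ) (g : S → Fin k), Function.Surjective g →
      (∀ᵐ ω ∂Pr, ∀ i j, Coalesces (fun n => F n ω) i j ↔ g i = g j) →
      IsBlockMeasure Pr F μ g :=
  blockMeasure_iff_classes_constant_general Pr μ hμnn hμsum F hiid
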